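/- For every extended program P, the set of well-supported models of P coincides with the set of stable models of P, i.e. WS(P) = SM(P). -/
import Mathlib


namespace RuleUpdates

/-- Objective literal: an atom (a natural number) or its strong negation. -/
inductive OLit where
  | pos : ℕ → OLit
  | neg : ℕ → OLit
deriving DecidableEq

/-- Strong negation on objective literals (with ¬¬p identified with p). -/
def OLit.compl : OLit → OLit
  | .pos p => .neg p
  | .neg p => .pos p

/-- Literal: an objective literal or its default negation (not not l = l). -/
inductive Lit where
  | obj : OLit → Lit
  | ndef : OLit → Lit
deriving DecidableEq

/-- Extended rule: a head literal and a finite set of body literals. -/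
structure Rule where
  head : Lit
  body : Finset Lit

/-- Interpretation: a consistent set of objective literals. -/
def Interp (J : Set OLit) : Prop :=
  ∀ p : ℕ, ¬ (OLit.pos p ∈ J ∧ OLit.neg p ∈ J)

/-- Satisfaction of a literal. -/
def satLit (J : Set OLit) : Lit → Prop
  | .obj l => l ∈ J
  | .ndef l => l ∉ J

/-- Satisfaction of a set of body literals. -/
def satBody (J : Set OLit) (B : Finset Lit) : Prop :=
  ∀ L ∈ B, satLit J L

/-- Satisfaction of a rule. -/
def satRule (J : Set OLit) (π : Rule) : Prop :=
  satBody J π.body → satLit J π.head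

/-- J is a model of a program. -/
def isModel (J : Set OLit) (P : Set Rule) : Prop :=
  ∀ π ∈ P, satRule J π

/-- J* = J ∪ { not l | l ∈ ℒ ∖ J }, as a set of literals. -/
def star (J : Set OLit) : Set Lit :=
  {L | ∃ l : OLit, (L = Lit.obj l ∧ l ∈ J) ∨ (L = Lit.ndef l ∧ l ∉ J)}

/-- def(J) = { (not l.) | l ∈ ℒ ∖ J }. -/
def defFacts (J : Set OLit) : Set Rule :=
  {π | ∃ l : OLit, l ∉ J ∧ π = ⟨Lit.ndef l, ∅⟩}

/-- S (a set of literals) is closed under program P, all literals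
treated as distinct propositional atoms. -/
def closedUnder (P : Set Rule) (S : Set Lit) : Prop :=
  ∀ π ∈ P, (π.body : Set Lit) ⊆ S → π.head ∈ S

/-- least(P): the least model of P when all literals are treated as
distinct propositional atoms. -/
def leastModel (P : Set Rule) : Set Lit :=
  ⋂₀ {S | closedUnder P S}

/-- Stable model of an extended program: J* = least(P ∪ def(J)). -/
def isStableModel (P : Set Rule) (J : Set OLit) : Prop :=
  Interp J ∧ star J = leastModel (P ∪ defFacts J)

/-- Level of a literal, with ℓ(not l) = ℓ(l). -/
def litLevel (ℓ : OLit → ℕ) : Lit → ℕ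
  | .obj l => ℓ l
  | .ndef l => ℓ l

/-- ℓ↑(S): the maximal level of a literal in the finite set S. -/
def supLevel (ℓ : OLit → ℕ) (S : Finset Lit) : ℕ :=
  S.sup (litLevel ℓ)

/-- ℓ↓(S): the minimal level of a literal in the finite set S. -/
noncomputable def infLevel (ℓ : OLit → ℕ) (S : Finset Lit) : ℕ :=
  sInf (litLevel ℓ '' (S : Set Lit))

/-- Well-supported model of an extended program w.r.t. a level mapping ℓ. -/
def isWSModelWith (P : Set Rule) (J : Set OLit) (ℓ : OLit → ℕ) : Prop :=
  isModel J P ∧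
    ∀ l ∈ J, ∃ π ∈ P, π.head = Lit.obj l ∧ satBody J π.body ∧
      supLevel ℓ π.body < ℓ l

/-- Well-supported model of an extended program. -/
def isWSModel (P : Set Rule) (J : Set OLit) : Prop :=
  Interp J ∧ ∃ ℓ : OLit → ℕ, isWSModelWith P J ℓ

/-- con(L): the literals in conflict with L. -/
def con : Lit → Finset Lit
  | .obj l => {Lit.ndef l, Lit.obj l.compl}
  | .ndef l => {Lit.obj l}

/-- ρ(P): all rules occurring in the components of the DLP. -/
def allRules {n : ℕ} (P : Fin n → Set Rule) : Set Rule :=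
  {π | ∃ i : Fin n, π ∈ P i}

/-- The rule π ∈ P i is rejected w.r.t. the set of literals S:
some later σ with conflicting head has its body included in S. -/
def rejIn {n : ℕ} (P : Fin n → Set Rule) (S : Set Lit) (i : Fin n) (π : Rule) : Prop :=
  ∃ j : Fin n, i < j ∧ ∃ σ ∈ P j, σ.head ∈ con π.head ∧ (σ.body : Set Lit) ⊆ S

/-- rem(P, S) = ρ(P) ∖ rej(P, S), as a set of component-indexed rules. -/
def remSet {n : ℕ} (P : Fin n → Set Rule) (S : Set Lit) : Set (Fin n × Rule) :=
  {x | x.2 ∈ P x.1 ∧ ¬ rejIn P S x.1 x.2}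

/-- The operator T_{P,J}. -/
def TOp {n : ℕ} (P : Fin n → Set Rule) (J : Set OLit) (S : Set Lit) : Set Lit :=
  {L | ((∃ x ∈ remSet P (star J), x.2.head = L ∧ (x.2.body : Set Lit) ⊆ S) ∨
        (∃ l : OLit, l ∉ J ∧ L = Lit.ndef l)) ∧
       ¬ ∃ σ ∈ remSet P S, σ.2.head ∈ con L ∧ (σ.2.body : Set Lit) ⊆ star J}

/-- Iterates of T_{P,J} starting from ∅. -/
def TIter {n : ℕ} (P : Fin n → Set Rule) (J : Set OLit) : ℕ → Set Lit
  | 0 => ∅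
  | k + 1 => TOp P J (TIter P J k)

/-- Extended RD-model of a DLP: J* = ⋃_{k≥0} T_{P,J}^k(∅). -/
def isExtRD {n : ℕ} (P : Fin n → Set Rule) (J : Set OLit) : Prop :=
  Interp J ∧ star J = ⋃ k : ℕ, TIter P J k

/-- rej^ℓ(P, J): π ∈ P i is rejected w.r.t. J and the level mapping ℓ. -/
def rejLvl {n : ℕ} (P : Fin n → Set Rule) (J : Set OLit) (ℓ : OLit → ℕ)
    (i : Fin n) (π : Rule) : Prop :=
  ∃ j : Fin n, i < j ∧ ∃ σ ∈ P j, σ.head ∈ con π.head ∧ satBody J σ.body ∧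
    supLevel ℓ σ.body < infLevel ℓ (con π.head)

/-- Extended WS-model of a DLP. -/
def isExtWS {n : ℕ} (P : Fin n → Set Rule) (J : Set OLit) : Prop :=
  Interp J ∧ ∃ ℓ : OLit → ℕ,
    (∀ i : Fin n, ∀ π ∈ P i, ¬ rejLvl P J ℓ i π → satRule J π) ∧
    (∀ l ∈ J, ∃ x ∈ remSet P (star J), x.2.head = Lit.obj l ∧ satBody J x.2.body ∧
      supLevel ℓ x.2.body < ℓ l)

/-- A program is acyclic w.r.t. a level mapping ℓ. -/
def acyclicWrt (Q : Set Rule) (ℓ : OLit → ℕ) : Prop :=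
  (∀ l : OLit, ℓ l = ℓ l.compl) ∧ ∀ π ∈ Q, supLevel ℓ π.body < litLevel ℓ π.head

lemma mem_star {J : Set OLit} {L : Lit} : L ∈ star J ↔ satLit J L := by
  cases L with
  | obj l =>
    simp only [star, Set.mem_setOf_eq, satLit]
    constructor
    · rintro ⟨l', h | h⟩
      · obtain ⟨h1, h2⟩ := h; cases h1; exact h2
      · exact absurd h.1 (by simp)
    · intro h; exact ⟨l, Or.inl ⟨rfl, h⟩⟩
  | ndef l =>
    simp only [star, Set.mem_setOf_eq, satLit]
    constructor
    · rintro ⟨l', h | h⟩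
      · exact absurd h.1 (by simp)
      · obtain ⟨h1, h2⟩ := h; cases h1; exact h2
    · intro h; exact ⟨l, Or.inr ⟨rfl, h⟩⟩

lemma closed_least (Q : Set Rule) : closedUnder Q (leastModel Q) := by
  intro π hπ hb
  intro S hS
  exact hS π hπ (fun L hL => hb hL S hS)

lemma least_subset {Q : Set Rule} {S : Set Lit} (h : closedUnder Q S) :
    leastModel Q ⊆ S := Set.sInter_subset_of_mem h

/-- Immediate consequence operator for a program with all literals atomic. -/
def TP (Q : Set Rule) (S : Set Lit) : Set Lit :=
  {L | ∃ π ∈ Q, π.head = L ∧ (π.body : Set Lit) ⊆ S}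

/-- Iterates of TP from ∅. -/
def TPit (Q : Set Rule) : ℕ → Set Lit
  | 0 => ∅
  | k + 1 => TP Q (TPit Q k)

lemma TP_mono {Q : Set Rule} {S T : Set Lit} (h : S ⊆ T) : TP Q S ⊆ TP Q T := by
  rintro L ⟨π, hπ, hh, hb⟩
  exact ⟨π, hπ, hh, hb.trans h⟩

lemma TPit_mono (Q : Set Rule) : Monotone (TPit Q) := by
  apply monotone_nat_of_le_succ
  intro k
  induction k with
  | zero => simp [TPit]
  | succ k ih => exact TP_mono ih

lemma TPit_subset_least (Q : Set Rule) : ∀ k, TPit Q k ⊆ leastModel Q := by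
  intro k
  induction k with
  | zero => simp [TPit]
  | succ k ih =>
    rintro L ⟨π, hπ, hh, hb⟩
    rw [← hh]
    exact closed_least Q π hπ (hb.trans ih)

lemma closed_union (Q : Set Rule) : closedUnder Q (⋃ k, TPit Q k) := by
  intro π hπ hb
  classical
  set f : Lit → ℕ := fun L => sInf {k | L ∈ TPit Q k} with hf
  set N : ℕ := π.body.sup f with hN
  have hbN : ∀ L ∈ π.body, L ∈ TPit Q N := by
    intro L hL
    have : L ∈ ⋃ k, TPit Q k := hb hL
    obtain ⟨_, ⟨k, rfl⟩, hk⟩ := this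
    have hne : {k | L ∈ TPit Q k}.Nonempty := ⟨k, hk⟩
    have hmem : L ∈ TPit Q (f L) := Nat.sInf_mem hne
    exact TPit_mono Q (Finset.le_sup hL) hmem
  have : π.head ∈ TPit Q (N + 1) := ⟨π, hπ, rfl, fun L hL => hbN L hL⟩
  exact Set.mem_iUnion.mpr ⟨N + 1, this⟩

lemma least_eq_union (Q : Set Rule) : leastModel Q = ⋃ k, TPit Q k := by
  apply Set.Subset.antisymm (least_subset (closed_union Q))
  exact Set.iUnion_subset (TPit_subset_least Q)

/-- WS(P) = SM(P) for every extended program P. -/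
theorem ws_models_eq_stable_models (P : Set Rule) :
    {J : Set OLit | isWSModel P J} = {J : Set OLit | isStableModel P J} := by
  ext J
  simp only [Set.mem_setOf_eq]
  constructor
  · -- WS → stable
    rintro ⟨hI, ℓ, hmod, hsup⟩
    refine ⟨hI, ?_⟩
    set Q : Set Rule := P ∪ defFacts J with hQ
    have hclosed : closedUnder Q (star J) := by
      rintro π (hπ | hπ) hb
      · have hbody : satBody J π.body := fun L hL => mem_star.mp (hb hL)
        exact mem_star.mpr (hmod π hπ hbody)
      · obtain ⟨l, hl, rfl⟩ := hπ
        exact mem_star.mpr hl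
    apply Set.Subset.antisymm
    · -- star J ⊆ leastModel Q
      have hndef : ∀ l : OLit, l ∉ J → Lit.ndef l ∈ leastModel Q := by
        intro l hl
        have : (⟨Lit.ndef l, ∅⟩ : Rule) ∈ Q := Or.inr ⟨l, hl, rfl⟩
        exact closed_least Q _ this (by simp)
      have key : ∀ n, ∀ l ∈ J, ℓ l ≤ n → Lit.obj l ∈ leastModel Q := by
        intro n
        induction n with
        | zero =>
          intro l hl hn
          obtain ⟨π, hπ, hh, hb, hlt⟩ := hsup l hl
          omega
        | succ n ih =>
          intro l hl hn
          obtain ⟨π, hπ, hh, hb, hlt⟩ := hsup l hl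
          have hbody : (π.body : Set Lit) ⊆ leastModel Q := by
            intro L hL
            have hsL : satLit J L := hb L hL
            cases L with
            | obj m =>
              have hm : m ∈ J := hsL
              have : litLevel ℓ (Lit.obj m) ≤ supLevel ℓ π.body := Finset.le_sup hL
              exact ih m hm (by simp only [litLevel] at this; omega)
            | ndef m => exact hndef m hsL
          have := closed_least Q π (Or.inl hπ) hbody
          rwa [hh] at this
      intro L hL
      have hsL : satLit J L := mem_star.mp hL
      cases L with
      | obj l => exact key (ℓ l) l hsL le_rfl
      | ndef l => exact hndef l hsL
    · exact least_subset hclosed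
  · -- stable → WS
    rintro ⟨hI, hst⟩
    refine ⟨hI, ?_⟩
    set Q : Set Rule := P ∪ defFacts J with hQ
    classical
    set ℓ : OLit → ℕ := fun m => sInf {k | Lit.obj m ∈ TPit Q k} with hℓ
    have hle : leastModel Q = star J := hst.symm
    have huni : (⋃ k, TPit Q k) = star J := by rw [← least_eq_union]; exact hle
    have hnotJ : ∀ m : OLit, m ∉ J → {k | Lit.obj m ∈ TPit Q k} = ∅ := by
      intro m hm
      ext k
      simp only [Set.mem_setOf_eq, Set.mem_empty_iff_false, iff_false]
      intro hk
      have : Lit.obj m ∈ star J := by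
        rw [← huni]; exact Set.mem_iUnion.mpr ⟨k, hk⟩
      exact hm (mem_star.mp this)
    refine ⟨ℓ, ?_, ?_⟩
    · -- J is a model of P
      intro π hπ hb
      have hbsub : (π.body : Set Lit) ⊆ leastModel Q := by
        intro L hL
        rw [hle]; exact mem_star.mpr (hb L hL)
      have := closed_least Q π (Or.inl hπ) hbsub
      rw [hle] at this
      exact mem_star.mp this
    · intro l hl
      have hmem : Lit.obj l ∈ ⋃ k, TPit Q k := by
        rw [huni]; exact mem_star.mpr hl
      obtain ⟨_, ⟨k, rfl⟩, hk⟩ := hmem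
      have hne : {k | Lit.obj l ∈ TPit Q k}.Nonempty := ⟨k, hk⟩
      have hmem' : Lit.obj l ∈ TPit Q (ℓ l) := Nat.sInf_mem hne
      have hpos : 0 < ℓ l := by
        rcases Nat.eq_zero_or_pos (ℓ l) with h0 | h
        · rw [h0] at hmem'; simp [TPit] at hmem'
        · exact h
      obtain ⟨n, hn⟩ : ∃ n, ℓ l = n + 1 := ⟨ℓ l - 1, by omega⟩
      rw [hn] at hmem'
      obtain ⟨π, hπQ, hh, hb⟩ := hmem'
      have hπP : π ∈ P := by
        rcases hπQ with h | h
        · exact h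
        · obtain ⟨m, _, rfl⟩ := h; simp at hh
      have hbstar : ∀ L ∈ π.body, L ∈ star J := by
        intro L hL
        rw [← huni]
        exact Set.mem_iUnion.mpr ⟨n, hb hL⟩
      refine ⟨π, hπP, hh, fun L hL => mem_star.mp (hbstar L hL), ?_⟩
      rw [hn]
      have : ∀ L ∈ π.body, litLevel ℓ L < n + 1 := by
        intro L hL
        cases L with
        | obj m =>
          have : ℓ m ≤ n := Nat.sInf_le (hb hL)
          simpa [litLevel] using Nat.lt_succ_of_le this
        | ndef m =>
          have hm : m ∉ J := mem_star.mp (hbstar _ hL)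
          have : ℓ m = 0 := by
            simp only [hℓ]
            rw [hnotJ m hm]
            exact Nat.sInf_empty
          simp [litLevel, this]
      exact Finset.sup_lt_iff (Nat.succ_pos n) |>.mpr this

end RuleUpdates
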